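/- Depth-1 types with the depth-1 composition operation and the dummy type form a monoid, and the composition is compatible with interval concatenation: for adjacent intervals I, J with max(I)+1 = min(J), type1(I) · type1(J) = type1(I ∪ J). -/

import Mathlib

/-- An interval `[lo, hi]` over the natural numbers. -/
structure Itv where
  lo : ℕ
  hi : ℕ
  le : lo ≤ hi

/-- The singleton interval `[x, x]`. -/
def Itv.sing (x : ℕ) : Itv := ⟨x, x, le_rfl⟩

/-- `J` is a proper prefix of `I`. -/
def isPrefix (J I : Itv) : Prop := J.lo = I.lo ∧ J.hi < I.hi

/-- `J` is a proper suffix of `I`. -/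
def isSuffix (J I : Itv) : Prop := J.hi = I.hi ∧ I.lo < J.lo

/-- BE formulas in homogeneous normal form: atoms are `π` and `π ∧ p`. -/
inductive BEpi (Sig : Type) : Type
  | pi : BEpi Sig
  | atomPi : Sig → BEpi Sig
  | neg : BEpi Sig → BEpi Sig
  | or : BEpi Sig → BEpi Sig → BEpi Sig
  | diaB : BEpi Sig → BEpi Sig
  | diaE : BEpi Sig → BEpi Sig

/-- Satisfaction of a formula in homogeneous normal form at an interval. -/
def satp {Sig : Type} (σ : Itv → Set Sig) : Itv → BEpi Sig → Prop
  | I, .pi => I.lo = I.hi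
  | I, .atomPi p => I.lo = I.hi ∧ p ∈ σ I
  | I, .neg φ => ¬ satp σ I φ
  | I, .or φ ψ => satp σ I φ ∨ satp σ I ψ
  | I, .diaB φ => ∃ J, isPrefix J I ∧ satp σ J φ
  | I, .diaE φ => ∃ J, isSuffix J I ∧ satp σ J φ

/-- Modal depth of a formula (not counting the `π` abbreviation). -/
def dep {Sig : Type} : BEpi Sig → ℕ
  | .pi => 0
  | .atomPi _ => 0
  | .neg φ => dep φ
  | .or φ ψ => max (dep φ) (dep ψ)
  | .diaB φ => dep φ + 1
  | .diaE φ => dep φ + 1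

/-- The set of subformulas of a formula. -/
def subf {Sig : Type} : BEpi Sig → Set (BEpi Sig)
  | .pi => {.pi}
  | .atomPi p => {.atomPi p}
  | .neg φ => insert (.neg φ) (subf φ)
  | .or φ ψ => insert (.or φ ψ) (subf φ ∪ subf ψ)
  | .diaB φ => insert (.diaB φ) (subf φ)
  | .diaE φ => insert (.diaE φ) (subf φ)

/-- Subformulas of `φ` of depth at most 1. -/
def Depth1 {Sig : Type} (φ : BEpi Sig) : Set (BEpi Sig) :=
  {α | α ∈ subf φ ∧ dep α ≤ 1}

/-- Length component of a depth-1 type: one point, two points, or more. -/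
inductive Len : Type
  | one | two | more
deriving DecidableEq

/-- A depth-1 type: length component, depth-0 type of the interval, and
depth-0 types of its two endpoint singletons. A depth-0 type is `some s`
(the labels, standing for `{π} ∪ s`) for singletons and `none` (∅) otherwise. -/
structure T1 (Sig : Type) where
  len : Len
  t : Option (Set Sig)
  b : Option (Set Sig)
  e : Option (Set Sig)

/-- The depth-0 type of an interval. -/
def type0 {Sig : Type} (σ : Itv → Set Sig) (I : Itv) : Option (Set Sig) :=
  if I.lo = I.hi then some (σ I) else none

/-- The depth-1 type of an interval. -/
def type1 {Sig : Type} (σ : Itv → Set Sig) (I : Itv) : T1 Sig :=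
  ⟨if I.lo = I.hi then .one else if I.hi = I.lo + 1 then .two else .more,
   type0 σ I, type0 σ (Itv.sing I.lo), type0 σ (Itv.sing I.hi)⟩

/-- Composition of length components. -/
def Len.comp : Len → Len → Len
  | .one, .one => .two
  | _, _ => .more

/-- Composition of depth-1 types. -/
def T1.comp {Sig : Type} (a b : T1 Sig) : T1 Sig :=
  ⟨a.len.comp b.len, none, a.b, b.e⟩

/-- Depth-1 types extended with the dummy type `none`, and their composition. -/
def ocomp {Sig : Type} : Option (T1 Sig) → Option (T1 Sig) → Option (T1 Sig)
  | none, x => x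
  | x, none => x
  | some a, some b => some (a.comp b)

/-- Truth of a depth-0 formula determined by a depth-0 type. -/
def ent0 {Sig : Type} : Option (Set Sig) → BEpi Sig → Prop
  | t, .pi => t.isSome
  | t, .atomPi p => ∃ s, t = some s ∧ p ∈ s
  | t, .neg φ => ¬ ent0 t φ
  | t, .or φ ψ => ent0 t φ ∨ ent0 t ψ
  | _, .diaB _ => False
  | _, .diaE _ => False

/-- Truth of a depth-(≤1) formula determined by a depth-1 type (`T ⊢ α`). -/
def ent {Sig : Type} (T : T1 Sig) : BEpi Sig → Prop
  | .pi => ent0 T.t .pi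
  | .atomPi p => ent0 T.t (.atomPi p)
  | .neg φ => ¬ ent T φ
  | .or φ ψ => ent T φ ∨ ent T ψ
  | .diaB α => match T.len with
      | .one => False
      | .two => ent0 T.b α
      | .more => ent0 T.b α ∨ ent0 none α
  | .diaE α => match T.len with
      | .one => False
      | .two => ent0 T.e α
      | .more => ent0 T.e α ∨ ent0 none α

/-- `⊢` lifted to possibly-dummy depth-1 types (the dummy entails nothing). -/
def entails {Sig : Type} (o : Option (T1 Sig)) (α : BEpi Sig) : Prop :=
  ∃ T, o = some T ∧ ent T α

/-- A depth-2 `φ`-type with left and right contexts. -/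
structure T2 (Sig : Type) where
  L : Option (T1 Sig)
  R : Option (T1 Sig)
  T : T1 Sig
  B : Set (BEpi Sig)
  E : Set (BEpi Sig)

/-- The depth-2 `φ`-type of an interval `I` with contexts `L`, `R`. -/
def type2 {Sig : Type} (σ : Itv → Set Sig) (φ : BEpi Sig)
    (L R : Option (T1 Sig)) (I : Itv) : T2 Sig :=
  ⟨L, R, type1 σ I,
   {α | α ∈ Depth1 φ ∧ ∃ J, isPrefix J I ∧ entails (ocomp L (some (type1 σ J))) α},
   {α | α ∈ Depth1 φ ∧ ∃ J, isSuffix J I ∧ entails (ocomp (some (type1 σ J)) R) α}⟩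

/-!
The length class of an interval depends only on its gap `hi - lo`, and the gaps of adjacent
intervals add up, plus one, to the gap of their union; the union has at least two points, so its
depth-0 type is `∅`, and its endpoint types are those of the outer endpoints. Associativity of
composition comes down to associativity of `Len.comp`, a finite check.
-/

def Len.ofGap : ℕ → Len
  | 0 => .one
  | 1 => .two
  | _ + 2 => .more

theorem Len.ofGap_comp_ofGap (m n : ℕ) :
    (Len.ofGap m).comp (Len.ofGap n) = Len.ofGap (m + n + 1) := by
  rcases m with _ | _ | m <;> rcases n with _ | _ | n <;> rfl

theorem Len.comp_assoc (a b c : Len) : (a.comp b).comp c = a.comp (b.comp c) := by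
  cases a <;> cases b <;> cases c <;> rfl

theorem T1.comp_assoc {Sig : Type} (a b c : T1 Sig) : (a.comp b).comp c = a.comp (b.comp c) := by
  simp only [T1.comp, Len.comp_assoc]

theorem ocomp_assoc {Sig : Type} (x y z : Option (T1 Sig)) :
    ocomp (ocomp x y) z = ocomp x (ocomp y z) := by
  cases x <;> cases y <;> cases z <;> simp only [ocomp, T1.comp_assoc]

theorem ocomp_none_left {Sig : Type} (x : Option (T1 Sig)) : ocomp none x = x := by
  cases x <;> rfl

theorem ocomp_none_right {Sig : Type} (x : Option (T1 Sig)) : ocomp x none = x := by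
  cases x <;> rfl

theorem type1_len {Sig : Type} (σ : Itv → Set Sig) (I : Itv) :
    (type1 σ I).len = Len.ofGap (I.hi - I.lo) := by
  obtain ⟨lo, hi, hle⟩ := I
  obtain ⟨d, rfl⟩ := Nat.exists_eq_add_of_le hle
  rcases d with _ | _ | d <;> simp [type1, Len.ofGap]

theorem type0_eq_none {Sig : Type} (σ : Itv → Set Sig) {I : Itv} (h : I.lo ≠ I.hi) :
    type0 σ I = none :=
  if_neg h

theorem type1_comp_type1_of_adjacent {Sig : Type} (σ : Itv → Set Sig) {I J K : Itv}
    (h : I.hi + 1 = J.lo) (hlo : K.lo = I.lo) (hhi : K.hi = J.hi) :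
    (type1 σ I).comp (type1 σ J) = type1 σ K := by
  have hI := I.le
  have hJ := J.le
  have hlen : (type1 σ I).len.comp (type1 σ J).len = (type1 σ K).len := by
    rw [type1_len, type1_len, type1_len, Len.ofGap_comp_ofGap]
    congr 1
    omega
  have ht : none = (type1 σ K).t := (type0_eq_none σ (by omega)).symm
  obtain ⟨lo, hi, _⟩ := K
  subst hlo hhi
  rw [T1.comp, hlen, ht]
  rfl

/-- Depth-1 types with composition and the dummy type form a monoid, and
composition is compatible with concatenation of adjacent intervals. -/
theorem depth1_types_monoid_and_compat {Sig : Type} (σ : Itv → Set Sig) :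
    (∀ I J : Itv, ∀ h : I.hi + 1 = J.lo,
      (type1 σ I).comp (type1 σ J) =
        type1 σ ⟨I.lo, J.hi, le_trans I.le (le_trans (by omega) J.le)⟩) ∧
    (∀ x y z : Option (T1 Sig), ocomp (ocomp x y) z = ocomp x (ocomp y z)) ∧
    (∀ x : Option (T1 Sig), ocomp none x = x) ∧
    (∀ x : Option (T1 Sig), ocomp x none = x) := by
  exact ⟨fun _ _ h => type1_comp_type1_of_adjacent σ h rfl rfl, ocomp_assoc, ocomp_none_left,
    ocomp_none_right⟩
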